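/- Under randomization of Z, exclusion restriction, and monotonicity Y₀ ≤ Y₁, the following bounds hold for each z ∈ {0,1}: P(Y = 1 | Z = z) ≤ P(Y₁ = 1) ≤ 1 − P(Y = 0, R = 1 | Z = z). -/
import Mathlib


open Finset
open scoped Classical

namespace PS

/-- Probability of an event `A` under weight function `p` on a finite sample space. -/
noncomputable def Prob {Ω : Type*} [Fintype Ω] (p : Ω → ℝ) (A : Ω → Prop) : ℝ :=
  ∑ ω ∈ Finset.univ.filter A, p ω

/-- Conditional probability `P(A | B)`. -/
noncomputable def CProb {Ω : Type*} [Fintype Ω] (p : Ω → ℝ) (A B : Ω → Prop) : ℝ :=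
  Prob p (fun ω => A ω ∧ B ω) / Prob p B

/-- Conditional expectation `E[f | B]`. -/
noncomputable def CExp {Ω : Type*} [Fintype Ω] (p : Ω → ℝ) (f : Ω → ℝ) (B : Ω → Prop) : ℝ :=
  (∑ ω ∈ Finset.univ.filter B, p ω * f ω) / Prob p B

/-- Indicator of a Boolean value, as a real number. -/
def ind (b : Bool) : ℝ := if b then 1 else 0

/-- Observed recommendation `R = R_Z`. -/
def obsR {Ω : Type*} (Z R₀ R₁ : Ω → Bool) (ω : Ω) : Bool := if Z ω then R₁ ω else R₀ ω

/-- Observed outcome `Y = Y_R` (exclusion restriction). -/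
def obsY {Ω : Type*} (Rv Y₀ Y₁ : Ω → Bool) (ω : Ω) : Bool := if Rv ω then Y₁ ω else Y₀ ω

/-- `Z` is independent of the vector `(R₀, R₁, Y₀, Y₁)`. -/
def IndepZ {Ω : Type*} [Fintype Ω] (p : Ω → ℝ) (Z R₀ R₁ Y₀ Y₁ : Ω → Bool) : Prop :=
  ∀ z a b c d : Bool,
    Prob p (fun ω => Z ω = z ∧ R₀ ω = a ∧ R₁ ω = b ∧ Y₀ ω = c ∧ Y₁ ω = d) =
      Prob p (fun ω => Z ω = z) *
        Prob p (fun ω => R₀ ω = a ∧ R₁ ω = b ∧ Y₀ ω = c ∧ Y₁ ω = d)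


section Helpers
variable {Ω : Type*} [Fintype Ω]

lemma Prob_congr (p : Ω → ℝ) {A B : Ω → Prop} (h : ∀ ω, A ω ↔ B ω) :
    Prob p A = Prob p B := by
  unfold Prob
  congr 1
  exact Finset.filter_congr (fun ω _ => h ω)

lemma Prob_mono (p : Ω → ℝ) (hp : ∀ ω, 0 ≤ p ω) {A B : Ω → Prop}
    (h : ∀ ω, A ω → B ω) : Prob p A ≤ Prob p B := by
  apply Finset.sum_le_sum_of_subset_of_nonneg
  · intro ω hω
    simp only [Finset.mem_filter] at *
    exact ⟨hω.1, h ω hω.2⟩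
  · intro i _ _; exact hp i

lemma Prob_empty (p : Ω → ℝ) {A : Ω → Prop} (h : ∀ ω, ¬ A ω) : Prob p A = 0 := by
  unfold Prob
  rw [Finset.filter_false_of_mem (fun ω _ => h ω), Finset.sum_empty]

lemma Prob_compl (p : Ω → ℝ) (hsum : ∑ ω, p ω = 1) (A : Ω → Prop) :
    Prob p (fun ω => ¬ A ω) = 1 - Prob p A := by
  have key : Prob p A + Prob p (fun ω => ¬ A ω) = 1 := by
    unfold Prob
    rw [Finset.sum_filter_add_sum_filter_not]
    exact hsum
  linarith

lemma Prob_partition (p : Ω → ℝ) (A : Ω → Prop) (F : Ω → Bool × Bool × Bool × Bool) :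
    Prob p A = ∑ q : Bool × Bool × Bool × Bool, Prob p (fun ω => A ω ∧ F ω = q) := by
  unfold Prob
  rw [← Finset.sum_fiberwise (Finset.univ.filter A) F p]
  refine Finset.sum_congr rfl fun q _ => ?_
  rw [Finset.filter_filter]
  congr 1
  ext ω
  simp [Finset.mem_filter]

lemma indep_ev (p : Ω → ℝ) (Z R₀ R₁ Y₀ Y₁ : Ω → Bool)
    (hindep : IndepZ p Z R₀ R₁ Y₀ Y₁) (g : Bool → Bool → Bool → Bool → Bool) (z : Bool) :
    Prob p (fun ω => Z ω = z ∧ g (R₀ ω) (R₁ ω) (Y₀ ω) (Y₁ ω) = true) =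
      Prob p (fun ω => Z ω = z) * Prob p (fun ω => g (R₀ ω) (R₁ ω) (Y₀ ω) (Y₁ ω) = true) := by
  set F : Ω → Bool × Bool × Bool × Bool := fun ω => (R₀ ω, R₁ ω, Y₀ ω, Y₁ ω) with hF
  rw [Prob_partition p _ F, Prob_partition p (fun ω => g (R₀ ω) (R₁ ω) (Y₀ ω) (Y₁ ω) = true) F,
    Finset.mul_sum]
  refine Finset.sum_congr rfl fun q _ => ?_
  obtain ⟨a, b, c, d⟩ := q
  by_cases hg : g a b c d = true
  · have e1 : Prob p (fun ω => (Z ω = z ∧ g (R₀ ω) (R₁ ω) (Y₀ ω) (Y₁ ω) = true) ∧ F ω = (a, b, c, d)) =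
        Prob p (fun ω => Z ω = z ∧ R₀ ω = a ∧ R₁ ω = b ∧ Y₀ ω = c ∧ Y₁ ω = d) := by
      refine Prob_congr p fun ω => ?_
      simp only [hF, Prod.ext_iff]
      constructor
      · rintro ⟨⟨hz, -⟩, h1, h2, h3, h4⟩; exact ⟨hz, h1, h2, h3, h4⟩
      · rintro ⟨hz, h1, h2, h3, h4⟩; exact ⟨⟨hz, by rw [h1, h2, h3, h4]; exact hg⟩, h1, h2, h3, h4⟩
    have e2 : Prob p (fun ω => g (R₀ ω) (R₁ ω) (Y₀ ω) (Y₁ ω) = true ∧ F ω = (a, b, c, d)) =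
        Prob p (fun ω => R₀ ω = a ∧ R₁ ω = b ∧ Y₀ ω = c ∧ Y₁ ω = d) := by
      refine Prob_congr p fun ω => ?_
      simp only [hF, Prod.ext_iff]
      constructor
      · rintro ⟨-, h1, h2, h3, h4⟩; exact ⟨h1, h2, h3, h4⟩
      · rintro ⟨h1, h2, h3, h4⟩; exact ⟨by rw [h1, h2, h3, h4]; exact hg, h1, h2, h3, h4⟩
    rw [e1, e2, hindep z a b c d]
  · have e1 : Prob p (fun ω => (Z ω = z ∧ g (R₀ ω) (R₁ ω) (Y₀ ω) (Y₁ ω) = true) ∧ F ω = (a, b, c, d)) = 0 := by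
      refine Prob_empty p fun ω => ?_
      rintro ⟨⟨-, hgt⟩, hq⟩
      simp only [hF, Prod.ext_iff] at hq
      exact hg (by rw [← hq.1, ← hq.2.1, ← hq.2.2.1, ← hq.2.2.2]; exact hgt)
    have e2 : Prob p (fun ω => g (R₀ ω) (R₁ ω) (Y₀ ω) (Y₁ ω) = true ∧ F ω = (a, b, c, d)) = 0 := by
      refine Prob_empty p fun ω => ?_
      rintro ⟨hgt, hq⟩
      simp only [hF, Prod.ext_iff] at hq
      exact hg (by rw [← hq.1, ← hq.2.1, ← hq.2.2.1, ← hq.2.2.2]; exact hgt)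
    rw [e1, e2, mul_zero]

end Helpers

theorem stmt8 {Ω : Type*} [Fintype Ω] (p : Ω → ℝ) (Z R₀ R₁ Y₀ Y₁ : Ω → Bool)
    (hp : ∀ ω, 0 ≤ p ω) (hsum : ∑ ω, p ω = 1)
    (hZpos : ∀ z : Bool, 0 < Prob p (fun ω => Z ω = z))
    (hindep : IndepZ p Z R₀ R₁ Y₀ Y₁)
    (hmono : ∀ ω, Y₀ ω = true → Y₁ ω = true) :
    ∀ z : Bool,
      CProb p (fun ω => obsY (obsR Z R₀ R₁) Y₀ Y₁ ω = true) (fun ω => Z ω = z) ≤ Prob p (fun ω => Y₁ ω = true) ∧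
      Prob p (fun ω => Y₁ ω = true) ≤
        1 - CProb p (fun ω => obsY (obsR Z R₀ R₁) Y₀ Y₁ ω = false ∧ obsR Z R₀ R₁ ω = true) (fun ω => Z ω = z) := by
  intro z
  have Pz := hZpos z
  set g1 : Bool → Bool → Bool → Bool → Bool := fun a b c d => if (if z then b else a) then d else c with hg1
  set g2 : Bool → Bool → Bool → Bool → Bool := fun a b c d => (if z then b else a) && !d with hg2
  have h1 : CProb p (fun ω => obsY (obsR Z R₀ R₁) Y₀ Y₁ ω = true) (fun ω => Z ω = z) =
      Prob p (fun ω => g1 (R₀ ω) (R₁ ω) (Y₀ ω) (Y₁ ω) = true) := by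
    unfold CProb
    rw [Prob_congr p (show ∀ ω, (obsY (obsR Z R₀ R₁) Y₀ Y₁ ω = true ∧ Z ω = z) ↔
        (Z ω = z ∧ g1 (R₀ ω) (R₁ ω) (Y₀ ω) (Y₁ ω) = true) from fun ω => by
      constructor
      · rintro ⟨hy, hz⟩; refine ⟨hz, ?_⟩; simp only [obsY, obsR, hz] at hy; simpa [hg1] using hy
      · rintro ⟨hz, hy⟩; refine ⟨?_, hz⟩; simp only [obsY, obsR, hz]; simpa [hg1] using hy),
      indep_ev p Z R₀ R₁ Y₀ Y₁ hindep g1 z]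
    field_simp
  have h2 : CProb p (fun ω => obsY (obsR Z R₀ R₁) Y₀ Y₁ ω = false ∧ obsR Z R₀ R₁ ω = true) (fun ω => Z ω = z) =
      Prob p (fun ω => g2 (R₀ ω) (R₁ ω) (Y₀ ω) (Y₁ ω) = true) := by
    unfold CProb
    rw [Prob_congr p (show ∀ ω, ((obsY (obsR Z R₀ R₁) Y₀ Y₁ ω = false ∧ obsR Z R₀ R₁ ω = true) ∧ Z ω = z) ↔
        (Z ω = z ∧ g2 (R₀ ω) (R₁ ω) (Y₀ ω) (Y₁ ω) = true) from fun ω => by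
      constructor
      · rintro ⟨⟨hy, hr⟩, hz⟩
        refine ⟨hz, ?_⟩
        simp only [obsR, hz] at hr
        simp only [obsY, obsR, hz, hr, if_true] at hy
        simp [hg2, hr, hy]
      · rintro ⟨hz, hy⟩
        simp only [hg2, Bool.and_eq_true, Bool.not_eq_true'] at hy
        refine ⟨⟨?_, ?_⟩, hz⟩
        · simp only [obsY, obsR, hz, hy.1, if_true]; exact hy.2
        · simp only [obsR, hz]; exact hy.1),
      indep_ev p Z R₀ R₁ Y₀ Y₁ hindep g2 z]
    field_simp
  constructor
  · rw [h1]
    refine Prob_mono p hp fun ω hω => ?_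
    cases hr : (if z then R₁ ω else R₀ ω) with
    | true => simp only [hg1, hr, if_true] at hω; exact hω
    | false =>
        simp only [hg1, hr] at hω
        exact hmono ω hω
  · rw [h2]
    have hc : Prob p (fun ω => ¬ Y₁ ω = true) = 1 - Prob p (fun ω => Y₁ ω = true) :=
      Prob_compl p hsum _
    have hm : Prob p (fun ω => g2 (R₀ ω) (R₁ ω) (Y₀ ω) (Y₁ ω) = true) ≤
        Prob p (fun ω => ¬ Y₁ ω = true) := by
      refine Prob_mono p hp fun ω hω => ?_
      simp only [hg2, Bool.and_eq_true, Bool.not_eq_true'] at hω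
      simp [hω.2]
    linarith


end PS
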